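/- If a constant so(4)-valued 2-form B_{μν}^{IJ} on ℝ⁴ satisfies (⋆B)_{μν}^{IJ}N_J = 0 for all μ,ν and some nonzero N ∈ ℝ⁴, then η^{μνρσ}ε_{IJKL}B_{μν}^{IJ}B_{ρσ}^{KL} = 0, i.e. B lies in the degenerate Plebanski sector. -/

import Mathlib

noncomputable section
open scoped BigOperators

/-- Sign of an integer, as a real number. -/
def sgnZ (x : ℤ) : ℝ := if 0 < x then 1 else if x < 0 then -1 else 0

/-- Levi-Civita symbol ε_{IJKL} on ℝ⁴, with ε_{0123} = 1. -/
def eps4 (a b c d : Fin 4) : ℝ :=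
  sgnZ ((b:ℤ) - a) * sgnZ ((c:ℤ) - a) * sgnZ ((d:ℤ) - a) *
  sgnZ ((c:ℤ) - b) * sgnZ ((d:ℤ) - b) * sgnZ ((d:ℤ) - c)

/-- Levi-Civita symbol on indices 1,2,3 (here `Fin 3`). -/
def eps3 (a b c : Fin 3) : ℝ := sgnZ ((b:ℤ) - a) * sgnZ ((c:ℤ) - a) * sgnZ ((c:ℤ) - b)

/-- Antisymmetry of a 4×4 real array. -/
def Antisym (B : Fin 4 → Fin 4 → ℝ) : Prop := ∀ I J, B I J = - B J I

/-- Self-dual part B_+^i = (1/4) ε^i_{jk} B^{jk} + (1/2) B^{0i}. -/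
def Bplus (B : Fin 4 → Fin 4 → ℝ) (i : Fin 3) : ℝ :=
  (1/4) * ∑ j, ∑ k, eps3 i j k * B j.succ k.succ + (1/2) * B 0 i.succ

/-- Anti-self-dual part B_-^i = (1/4) ε^i_{jk} B^{jk} - (1/2) B^{0i}. -/
def Bminus (B : Fin 4 → Fin 4 → ℝ) (i : Fin 3) : ℝ :=
  (1/4) * ∑ j, ∑ k, eps3 i j k * B j.succ k.succ - (1/2) * B 0 i.succ

/-- Hodge dual (⋆B)^{IJ} = (1/2) ε^{IJ}_{KL} B^{KL} (Euclidean metric). -/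
def hodge (B : Fin 4 → Fin 4 → ℝ) (I J : Fin 4) : ℝ :=
  (1/2) * ∑ K, ∑ L, eps4 I J K L * B K L

/-! For each pair of index pairs, the ε-pairing of the internal matrices `B μ ν` and `B ρ σ` is
four times their polarized Pfaffian, which is unchanged under replacing both matrices by their
Hodge duals. The duals are antisymmetric matrices with the common nonzero kernel vector `N`, and
the polarized Pfaffian of two such matrices vanishes: multiplied by any component `N M` it is a
combination of components of the two matrices applied to `N`. Hence every ε-pairing vanishes, and
so does the full contraction.
-/

lemma sgnZ_neg (x : ℤ) : sgnZ (-x) = -sgnZ x := by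
  unfold sgnZ
  split_ifs <;> first | omega | norm_num

lemma eps4_swap (a b c d : Fin 4) : eps4 b a c d = -eps4 a b c d := by
  unfold eps4
  rw [← neg_sub, sgnZ_neg]
  ring

lemma Antisym.apply_self {A : Fin 4 → Fin 4 → ℝ} (hA : Antisym A) (I : Fin 4) : A I I = 0 := by
  linarith [hA I I]

lemma antisym_hodge (A : Fin 4 → Fin 4 → ℝ) : Antisym (hodge A) := by
  intro I J
  simp only [hodge, eps4_swap J I, neg_mul, Finset.sum_neg_distrib, mul_neg]

def epsPairing (A C : Fin 4 → Fin 4 → ℝ) : ℝ :=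
  ∑ I, ∑ J, ∑ K, ∑ L, eps4 I J K L * A I J * C K L

/-- `Pf (A + C) = Pf A + polarPfaffian A C + Pf C` for antisymmetric `A`, `C`. -/
def polarPfaffian (A C : Fin 4 → Fin 4 → ℝ) : ℝ :=
  A 0 1 * C 2 3 - A 0 2 * C 1 3 + A 0 3 * C 1 2 + A 1 2 * C 0 3 - A 1 3 * C 0 2 + A 2 3 * C 0 1

lemma fin4_vals : ((0:Fin 4):ℤ) = 0 ∧ ((1:Fin 4):ℤ) = 1 ∧ ((2:Fin 4):ℤ) = 2 ∧ ((3:Fin 4):ℤ) = 3 :=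
  ⟨rfl, rfl, rfl, rfl⟩

lemma epsPairing_eq_four_mul_polarPfaffian {A C : Fin 4 → Fin 4 → ℝ} (hA : Antisym A)
    (hC : Antisym C) : epsPairing A C = 4 * polarPfaffian A C := by
  simp only [epsPairing, polarPfaffian, Fin.sum_univ_four, eps4, sgnZ, fin4_vals]
  norm_num
  rw [hA 1 0, hA 2 0, hA 3 0, hA 2 1, hA 3 1, hA 3 2,
    hC 1 0, hC 2 0, hC 3 0, hC 2 1, hC 3 1, hC 3 2]
  ring

lemma polarPfaffian_hodge {A C : Fin 4 → Fin 4 → ℝ} (hA : Antisym A) (hC : Antisym C) :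
    polarPfaffian (hodge A) (hodge C) = polarPfaffian A C := by
  simp only [polarPfaffian, hodge, Fin.sum_univ_four, eps4, sgnZ, fin4_vals]
  norm_num
  rw [hA 1 0, hA 2 0, hA 3 0, hA 2 1, hA 3 1, hA 3 2,
    hC 1 0, hC 2 0, hC 3 0, hC 2 1, hC 3 1, hC 3 2]
  ring

lemma polarPfaffian_eq_zero_of_mulVec_eq_zero {A C : Fin 4 → Fin 4 → ℝ} (hA : Antisym A)
    (hC : Antisym C) {N : Fin 4 → ℝ} (hN : N ≠ 0) (hAN : ∀ I, ∑ J, A I J * N J = 0)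
    (hCN : ∀ I, ∑ J, C I J * N J = 0) : polarPfaffian A C = 0 := by
  have h0 := hAN 0; have h1 := hAN 1; have h2 := hAN 2; have h3 := hAN 3
  have k0 := hCN 0; have k1 := hCN 1; have k2 := hCN 2; have k3 := hCN 3
  simp only [Fin.sum_univ_four, hA.apply_self, hC.apply_self, hA 1 0, hA 2 0, hA 3 0, hA 2 1,
    hA 3 1, hA 3 2, hC 1 0, hC 2 0, hC 3 0, hC 2 1, hC 3 1, hC 3 2] at h0 h1 h2 h3 k0 k1 k2 k3
  have hmul : ∀ M, polarPfaffian A C * N M = 0 := by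
    unfold polarPfaffian
    intro M
    fin_cases M <;> dsimp
    · linear_combination (-C 2 3) * h1 + C 1 3 * h2 - C 1 2 * h3
        - A 2 3 * k1 + A 1 3 * k2 - A 1 2 * k3
    · linear_combination C 2 3 * h0 - C 0 3 * h2 + C 0 2 * h3
        + A 2 3 * k0 - A 0 3 * k2 + A 0 2 * k3
    · linear_combination (-C 1 3) * h0 + C 0 3 * h1 - C 0 1 * h3
        - A 1 3 * k0 + A 0 3 * k1 - A 0 1 * k3
    · linear_combination C 1 2 * h0 - C 0 2 * h1 + C 0 1 * h2
        + A 1 2 * k0 - A 0 2 * k1 + A 0 1 * k2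
  by_contra hP
  exact hN (funext fun M => (mul_eq_zero.mp (hmul M)).resolve_left hP)

lemma epsPairing_eq_zero_of_hodge_mulVec_eq_zero {A C : Fin 4 → Fin 4 → ℝ} (hA : Antisym A)
    (hC : Antisym C) {N : Fin 4 → ℝ} (hN : N ≠ 0) (hAN : ∀ I, ∑ J, hodge A I J * N J = 0)
    (hCN : ∀ I, ∑ J, hodge C I J * N J = 0) : epsPairing A C = 0 := by
  rw [epsPairing_eq_four_mul_polarPfaffian hA hC, ← polarPfaffian_hodge hA hC,
    polarPfaffian_eq_zero_of_mulVec_eq_zero (antisym_hodge A) (antisym_hodge C) hN hAN hCN,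
    mul_zero]

theorem degenerate_sector_of_normal_general
    (B : Fin 4 → Fin 4 → Fin 4 → Fin 4 → ℝ)
    (hanti_st : ∀ μ ν, Antisym (fun I J => B μ ν I J))
    (N : Fin 4 → ℝ) (hN : N ≠ 0)
    (hBN : ∀ μ ν I, ∑ J, hodge (B μ ν) I J * N J = 0) :
    ∑ μ, ∑ ν, ∑ ρ, ∑ σ, ∑ I, ∑ J, ∑ K, ∑ L,
      eps4 μ ν ρ σ * eps4 I J K L * B μ ν I J * B ρ σ K L = 0 := by
  have hpair : ∀ μ ν ρ σ, epsPairing (B μ ν) (B ρ σ) = 0 := fun μ ν ρ σ =>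
    epsPairing_eq_zero_of_hodge_mulVec_eq_zero (hanti_st μ ν) (hanti_st ρ σ) hN (hBN μ ν)
      (hBN ρ σ)
  calc _ = ∑ μ, ∑ ν, ∑ ρ, ∑ σ, eps4 μ ν ρ σ * epsPairing (B μ ν) (B ρ σ) := by
        simp only [epsPairing, Finset.mul_sum, mul_assoc]
    _ = 0 := by simp only [hpair, mul_zero, Finset.sum_const_zero]

/-- If a constant so(4)-valued 2-form B_{μν}^{IJ} satisfies (⋆B)_{μν}^{IJ}N_J = 0
for some nonzero N, then η^{μνρσ}ε_{IJKL}B_{μν}^{IJ}B_{ρσ}^{KL} = 0, i.e. B lies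
in the degenerate Plebanski sector. -/
theorem degenerate_sector_of_normal
    (B : Fin 4 → Fin 4 → Fin 4 → Fin 4 → ℝ)
    (hanti_st : ∀ μ ν, Antisym (fun I J => B μ ν I J))
    (hanti_int : ∀ I J μ ν, B μ ν I J = - B ν μ I J)
    (N : Fin 4 → ℝ) (hN : N ≠ 0)
    (hBN : ∀ μ ν I, ∑ J, hodge (B μ ν) I J * N J = 0) :
    ∑ μ, ∑ ν, ∑ ρ, ∑ σ, ∑ I, ∑ J, ∑ K, ∑ L,
      eps4 μ ν ρ σ * eps4 I J K L * B μ ν I J * B ρ σ K L = 0 :=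
  degenerate_sector_of_normal_general B hanti_st N hN hBN
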